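/- (N qubit states of equal purity with the origin in their Bloch polytope.) Let N ≥ 1, f ∈ [0,1], and let v_1,…,v_N ∈ ℝ³ with ‖v_x‖ = f for every x and with the zero vector contained in the convex hull of {v_1,…,v_N}. Let ρ_x = (I + v_x·(σ1,σ2,σ3))/2 be the corresponding Bloch states on ℂ². Then the guessing probability for ρ_1,…,ρ_N with uniform prior probabilities 1/N equals (1 + f)/N, independently of any other details (such as the mutual angles) of the given states. -/

import Mathlib

open BigOperators Matrix
open scoped ComplexOrder

/-- An N-outcome POVM: positive semidefinite elements summing to the identity. -/
def IsPOVM {d N : ℕ} (M : Fin N → Matrix (Fin d) (Fin d) ℂ) : Prop :=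
  (∀ x, (M x).PosSemidef) ∧ ∑ x, M x = 1

/-- The Bloch state `ρ(v) = (I + v₁σ₁ + v₂σ₂ + v₃σ₃)/2` of a Bloch vector `v ∈ ℝ³`. -/
noncomputable def blochState (v : EuclideanSpace ℝ (Fin 3)) : Matrix (Fin 2) (Fin 2) ℂ :=
  (1 / 2 : ℂ) • ((1 : Matrix (Fin 2) (Fin 2) ℂ)
    + (v 0 : ℂ) • !![0, 1; 1, 0]
    + (v 1 : ℂ) • !![0, -Complex.I; Complex.I, 0]
    + (v 2 : ℂ) • !![1, 0; 0, -1])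

/-!
Write `ρ(v) = (1 + σ(v))/2` with `σ(v) = v₁σ₁ + v₂σ₂ + v₃σ₃`. The Pauli matrices anticommute, so
`σ(u)σ(v) + σ(v)σ(u) = 2⟪u, v⟫ • 1`; in particular `σ(v)² = ‖v‖² • 1`, so `‖v‖ • 1 ± σ(v)` is
positive semidefinite. Hence `ρ(v) ≤ (1 + ‖v‖)/2 • 1`, and every POVM gets
`∑ₓ tr(Mₓ ρₓ) ≤ (1 + f)/2 · tr 1 = 1 + f`.

For equality take convex weights `p` with `∑ₓ pₓ vₓ = 0` and `Mₓ = pₓ (1 + σ(vₓ/f))`: these sum to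
`1` precisely because the weights annihilate the Bloch vectors, and `tr(Mₓ ρₓ) = pₓ (1 + f)`.
When `f = 0` the junk value `0⁻¹ = 0` makes this `Mₓ = pₓ • 1`, which is still optimal.
-/

namespace Matrix

variable {n 𝕜 : Type*} [Fintype n] [RCLike 𝕜]

open scoped MatrixOrder in
theorem PosSemidef.trace_mul_nonneg {A B : Matrix n n 𝕜} (hA : A.PosSemidef)
    (hB : B.PosSemidef) : 0 ≤ (A * B).trace := by
  classical
  obtain ⟨C, rfl⟩ := CStarAlgebra.nonneg_iff_eq_star_mul_self.mp hA.nonneg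
  rw [mul_assoc, trace_mul_comm, star_eq_conjTranspose]
  exact (hB.mul_mul_conjTranspose_same C).trace_nonneg

theorem IsHermitian.posSemidef_of_mul_self_eq_smul {B : Matrix n n 𝕜} (hB : B.IsHermitian)
    {c : ℝ} (hc : 0 ≤ c) (hsq : B * B = c • B) : B.PosSemidef := by
  have hBB : Bᴴ * B = c • B := by rw [hB.eq, hsq]
  rcases hc.eq_or_lt with rfl | hc
  · rw [zero_smul, conjTranspose_mul_self_eq_zero] at hBB
    exact hBB ▸ .zero
  · have : B = c⁻¹ • (Bᴴ * B) := by rw [hBB, smul_smul, inv_mul_cancel₀ hc.ne', one_smul]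
    rw [this]
    exact (posSemidef_conjTranspose_mul_self B).smul (inv_nonneg.2 hc.le)

end Matrix

open scoped InnerProductSpace

noncomputable def pauliVec : EuclideanSpace ℝ (Fin 3) →ₗ[ℝ] Matrix (Fin 2) (Fin 2) ℂ where
  toFun v :=
    v 0 • !![0, 1; 1, 0] + v 1 • !![0, -Complex.I; Complex.I, 0] + v 2 • !![1, 0; 0, -1]
  map_add' u v := by simp only [PiLp.add_apply, add_smul]; abel
  map_smul' c v := by
    simp only [PiLp.smul_apply, smul_eq_mul, mul_smul, smul_add, RingHom.id_apply]

lemma blochState_eq (v : EuclideanSpace ℝ (Fin 3)) :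
    blochState v = (2⁻¹ : ℝ) • (1 + pauliVec v) := by
  simp only [blochState, pauliVec, LinearMap.coe_mk, AddHom.coe_mk, ← Complex.coe_smul,
    add_assoc]
  norm_num

lemma isHermitian_pauliVec (v : EuclideanSpace ℝ (Fin 3)) : (pauliVec v).IsHermitian := by
  ext i j
  fin_cases i <;> fin_cases j <;> simp [pauliVec]

lemma trace_pauliVec (v : EuclideanSpace ℝ (Fin 3)) : (pauliVec v).trace = 0 := by
  simp [pauliVec, trace_fin_two]

lemma pauliVec_mul_add_mul_comm (u v : EuclideanSpace ℝ (Fin 3)) :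
    pauliVec u * pauliVec v + pauliVec v * pauliVec u = (2 * ⟪u, v⟫_ℝ) • 1 := by
  ext i j
  fin_cases i <;> fin_cases j <;>
    simp [pauliVec, PiLp.inner_apply, Fin.sum_univ_three, Complex.ext_iff] <;>
    constructor <;> ring

lemma pauliVec_mul_self (v : EuclideanSpace ℝ (Fin 3)) :
    pauliVec v * pauliVec v = (‖v‖ ^ 2) • 1 := by
  have h := pauliVec_mul_add_mul_comm v v
  rw [real_inner_self_eq_norm_sq, ← two_smul ℝ, mul_smul] at h
  exact smul_right_injective _ two_ne_zero h

lemma trace_pauliVec_mul (u v : EuclideanSpace ℝ (Fin 3)) :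
    (pauliVec u * pauliVec v).trace = 2 * ⟪u, v⟫_ℝ := by
  have h := congrArg trace (pauliVec_mul_add_mul_comm u v)
  rw [trace_add, trace_mul_comm (pauliVec v), ← two_mul, trace_smul, trace_one] at h
  simp only [Fintype.card_fin, Nat.cast_ofNat, Complex.real_smul] at h
  push_cast at h
  linear_combination h / 2

lemma posSemidef_norm_smul_one_add_pauliVec (v : EuclideanSpace ℝ (Fin 3)) :
    (‖v‖ • 1 + pauliVec v).PosSemidef := by
  have hherm := (PosSemidef.one.smul (norm_nonneg v)).isHermitian.add (isHermitian_pauliVec v)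
  refine hherm.posSemidef_of_mul_self_eq_smul (c := 2 * ‖v‖) (by positivity) ?_
  rw [add_mul, mul_add, mul_add, pauliVec_mul_self]
  simp only [smul_mul_assoc, mul_smul_comm, one_mul, mul_one]
  module

lemma posSemidef_smul_one_add_pauliVec {v : EuclideanSpace ℝ (Fin 3)} {c : ℝ} (hv : ‖v‖ ≤ c) :
    (c • 1 + pauliVec v).PosSemidef := by
  have h := (PosSemidef.one.smul (sub_nonneg.2 hv)).add (posSemidef_norm_smul_one_add_pauliVec v)
  rwa [← add_assoc, ← add_smul, sub_add_cancel] at h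

lemma trace_one_add_pauliVec_mul_blochState (u v : EuclideanSpace ℝ (Fin 3)) :
    ((1 + pauliVec u) * blochState v).trace = 1 + ⟪u, v⟫_ℝ := by
  simp only [blochState_eq, mul_smul_comm, trace_smul, add_mul, mul_add, one_mul, mul_one,
    trace_add, trace_pauliVec, trace_pauliVec_mul, trace_one, Fintype.card_fin, Complex.real_smul]
  push_cast
  ring

lemma trace_one_add_pauliVec_inv_norm_smul_mul_blochState (v : EuclideanSpace ℝ (Fin 3)) :
    ((1 + pauliVec (‖v‖⁻¹ • v)) * blochState v).trace = ((1 + ‖v‖ : ℝ) : ℂ) := by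
  rw [trace_one_add_pauliVec_mul_blochState, real_inner_smul_left, real_inner_self_eq_norm_sq,
    pow_two, ← mul_assoc, inv_mul_mul_self]
  norm_cast

lemma re_trace_mul_blochState_le {M : Matrix (Fin 2) (Fin 2) ℂ} (hM : M.PosSemidef)
    (v : EuclideanSpace ℝ (Fin 3)) :
    (M * blochState v).trace.re ≤ (1 + ‖v‖) / 2 * M.trace.re := by
  have hgap : ((2⁻¹ : ℝ) • (‖-v‖ • 1 + pauliVec (-v))).PosSemidef :=
    (posSemidef_smul_one_add_pauliVec le_rfl).smul (by norm_num)
  have key : (M * ((2⁻¹ : ℝ) • (‖-v‖ • 1 + pauliVec (-v)))).trace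
      = ((1 + ‖v‖) / 2 : ℝ) • M.trace - (M * blochState v).trace := by
    rw [blochState_eq, norm_neg, map_neg]
    simp only [mul_smul_comm, mul_add, mul_neg, mul_one, trace_smul, trace_add, trace_neg]
    module
  have := (RCLike.nonneg_iff.mp (hM.trace_mul_nonneg hgap)).1
  rw [key] at this
  simp only [RCLike.re_to_complex, Complex.sub_re, Complex.smul_re, smul_eq_mul] at this
  linarith

lemma IsPOVM.sum_re_trace {d N : ℕ} {M : Fin N → Matrix (Fin d) (Fin d) ℂ} (hM : IsPOVM M) :
    ∑ x, (M x).trace.re = d := by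
  rw [← Complex.re_sum, ← trace_sum, hM.2, trace_one, Fintype.card_fin, Complex.natCast_re]

lemma isPOVM_smul_one_add_pauliVec {N : ℕ} {p : Fin N → ℝ}
    {u : Fin N → EuclideanSpace ℝ (Fin 3)} (hp : ∀ x, 0 ≤ p x) (hp1 : ∑ x, p x = 1)
    (hu : ∀ x, ‖u x‖ ≤ 1) (hpu : ∑ x, p x • u x = 0) :
    IsPOVM fun x => p x • (1 + pauliVec (u x)) := by
  refine ⟨fun x => ?_, ?_⟩
  · simpa using (posSemidef_smul_one_add_pauliVec (hu x)).smul (hp x)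
  · simp only [smul_add, Finset.sum_add_distrib, ← Finset.sum_smul, hp1, one_smul, ← map_smul,
      ← map_sum, hpu, map_zero, add_zero]

theorem exists_weights_of_mem_convexHull_range {ι R E : Type*} [Fintype ι] [Field R]
    [LinearOrder R] [IsStrictOrderedRing R] [AddCommGroup E] [Module R E] {v : ι → E} {y : E}
    (hy : y ∈ convexHull R (Set.range v)) :
    ∃ p : ι → R, (∀ x, 0 ≤ p x) ∧ ∑ x, p x = 1 ∧ ∑ x, p x • v x = y := by
  classical
  rw [convexHull_range_eq_exists_affineCombination] at hy
  obtain ⟨s, w, hw0, hw1, rfl⟩ := hy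
  refine ⟨fun x => if x ∈ s then w x else 0, fun x => ?_, ?_, ?_⟩
  · by_cases hx : x ∈ s <;> simp [hx, hw0]
  · rw [Finset.sum_ite_mem, Finset.univ_inter, hw1]
  · simp [s.affineCombination_eq_linear_combination v w hw1, ite_smul, Finset.sum_ite_mem]

theorem equal_purity_bloch_states_guessing_probability_general
    (N : ℕ)
    (f : ℝ)
    (v : Fin N → EuclideanSpace ℝ (Fin 3))
    (hnorm : ∀ x, ‖v x‖ = f)
    (hhull : (0 : EuclideanSpace ℝ (Fin 3)) ∈ convexHull ℝ (Set.range v)) :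
    IsGreatest {w : ℝ | ∃ M : Fin N → Matrix (Fin 2) (Fin 2) ℂ, IsPOVM M ∧
        w = ∑ x, (1 / (N : ℝ)) * ((M x * blochState (v x)).trace).re}
      ((1 + f) / N) := by
  obtain ⟨p, hp0, hp1, hpv⟩ := exists_weights_of_mem_convexHull_range hhull
  refine ⟨⟨fun x => p x • (1 + pauliVec (f⁻¹ • v x)), ?_, ?_⟩, ?_⟩
  · refine isPOVM_smul_one_add_pauliVec hp0 hp1 (fun x => ?_) ?_
    · rw [norm_smul, hnorm, norm_inv, Real.norm_eq_abs]
      exact inv_mul_le_one_of_le₀ (le_abs_self f) (abs_nonneg f)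
    · simp only [smul_comm (p _) f⁻¹, ← Finset.smul_sum, hpv, smul_zero]
  · have hval : ∀ x, ((p x • (1 + pauliVec (f⁻¹ • v x))) * blochState (v x)).trace.re
        = p x * (1 + f) := fun x => by
      rw [← hnorm x, smul_mul_assoc, trace_smul,
        trace_one_add_pauliVec_inv_norm_smul_mul_blochState, Complex.smul_re, Complex.ofReal_re,
        smul_eq_mul]
    simp only [hval, ← Finset.mul_sum, ← Finset.sum_mul, hp1]
    ring
  · rintro w ⟨M, hM, rfl⟩
    calc ∑ x, 1 / (N : ℝ) * (M x * blochState (v x)).trace.re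
        ≤ ∑ x, 1 / (N : ℝ) * ((1 + f) / 2 * (M x).trace.re) := by
          gcongr with x
          simpa only [hnorm] using re_trace_mul_blochState_le (hM.1 x) (v x)
      _ = 1 / (N : ℝ) * ((1 + f) / 2 * ∑ x, (M x).trace.re) := by simp only [Finset.mul_sum]
      _ = (1 + f) / N := by rw [hM.sum_re_trace]; ring

/-- N equal-purity qubit states whose Bloch polytope contains the
origin: if `‖v_x‖ = f` for `x = 1, …, N` and `0` lies in the convex hull of the Bloch
vectors, then the guessing probability with uniform priors `1/N` is `(1 + f)/N`. -/
theorem equal_purity_bloch_states_guessing_probability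
    (N : ℕ) (hN : 1 ≤ N)
    (f : ℝ) (hf : f ∈ Set.Icc (0 : ℝ) 1)
    (v : Fin N → EuclideanSpace ℝ (Fin 3))
    (hnorm : ∀ x, ‖v x‖ = f)
    (hhull : (0 : EuclideanSpace ℝ (Fin 3)) ∈ convexHull ℝ (Set.range v)) :
    IsGreatest {w : ℝ | ∃ M : Fin N → Matrix (Fin 2) (Fin 2) ℂ, IsPOVM M ∧
        w = ∑ x, (1 / (N : ℝ)) * ((M x * blochState (v x)).trace).re}
      ((1 + f) / N) :=
  equal_purity_bloch_states_guessing_probability_general N f v hnorm hhull
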